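/- arXiv:1802.02146 — 4 statements merged into one kernel-verified Lean document; each statement's English description precedes it below -/
import Mathlib

section
/- Let m ≥ 0 be a real number and n_1, ..., n_r positive integers summing to n. Then ∏_{i=1}^r (m/n_i + 1) ≤ ( m/(n_1 n_2 ⋯ n_r)^(1/r) + (n/r)^(1 - 1/r) )^r. -/
/-!
Multiplying out by `G = ∏ aᵢ`, the claim reads `∏ (m + aᵢ) ≤ (m + A^(1-1/r) G^(1/r))^r` with
`A = (∑ aᵢ)/r`. AM-GM bounds the left side by `(m + A)^r`, and since every `aᵢ ≥ 1` we have
`A ≤ max aᵢ ≤ G`, hence `A = A^(1-1/r) A^(1/r) ≤ A^(1-1/r) G^(1/r)`.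
-/

open Finset Real

namespace Finset

variable {ι : Type*} {s : Finset ι}

theorem prod_le_sum_div_card_pow {z : ι → ℝ} (hz : ∀ i ∈ s, 0 ≤ z i) :
    ∏ i ∈ s, z i ≤ ((∑ i ∈ s, z i) / #s) ^ #s := by
  obtain rfl | hs := s.eq_empty_or_nonempty
  · simp
  have hk : (#s : ℝ) ≠ 0 := by positivity
  have amgm : (∏ i ∈ s, z i) ^ (#s : ℝ)⁻¹ ≤ (∑ i ∈ s, z i) / #s := by
    rw [← finsetProd_rpow _ _ hz, div_eq_inv_mul, mul_sum]
    refine geom_mean_le_arith_mean_weighted s _ z (fun _ _ => by positivity) ?_ hz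
    rw [sum_const, nsmul_eq_mul, mul_inv_cancel₀ hk]
  calc ∏ i ∈ s, z i = ((∏ i ∈ s, z i) ^ (#s : ℝ)⁻¹) ^ #s :=
        (rpow_inv_natCast_pow (prod_nonneg hz) hs.card_ne_zero).symm
    _ ≤ ((∑ i ∈ s, z i) / #s) ^ #s := pow_le_pow_left₀ (rpow_nonneg (prod_nonneg hz) _) amgm _

theorem sum_le_card_mul_prod_of_one_le {f : ι → ℝ} (hf : ∀ i ∈ s, 1 ≤ f i) :
    ∑ i ∈ s, f i ≤ #s * ∏ i ∈ s, f i := by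
  have single_le_prod : ∀ i ∈ s, f i ≤ ∏ j ∈ s, f j := fun i hi => by
    simpa using prod_le_prod_of_subset_of_one_le (singleton_subset_iff.2 hi)
      (by simpa using zero_le_one.trans (hf i hi)) (fun j hj _ => hf j hj)
  simpa using sum_le_sum single_le_prod

end Finset

theorem le_rpow_one_sub_mul_rpow {x y t : ℝ} (hx : 0 ≤ x) (hxy : x ≤ y) (ht : 0 ≤ t) :
    x ≤ x ^ (1 - t) * y ^ t := by
  obtain rfl | hx := hx.eq_or_lt
  · positivity
  calc x = x ^ (1 - t) * x ^ t := by rw [← rpow_add hx, sub_add_cancel, rpow_one]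
    _ ≤ x ^ (1 - t) * y ^ t := by gcongr

theorem prod_div_add_one_le {ι : Type*} {s : Finset ι} (hs : s.Nonempty) {m : ℝ} (hm : 0 ≤ m)
    {a : ι → ℝ} (ha : ∀ i ∈ s, 1 ≤ a i) :
    ∏ i ∈ s, (m / a i + 1) ≤
      (m / (∏ i ∈ s, a i) ^ ((1 : ℝ) / #s) +
        ((∑ i ∈ s, a i) / #s) ^ (1 - (1 : ℝ) / #s)) ^ #s := by
  set k := #s
  set G := ∏ i ∈ s, a i
  set A := (∑ i ∈ s, a i) / k
  set g := G ^ ((1 : ℝ) / k)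
  have ha₀ : ∀ i ∈ s, 0 < a i := fun i hi => one_pos.trans_le (ha i hi)
  have hG : 0 < G := prod_pos ha₀
  have hk : (k : ℝ) ≠ 0 := Nat.cast_ne_zero.2 hs.card_ne_zero
  have hA : 0 ≤ A := div_nonneg (sum_nonneg fun i hi => (ha₀ i hi).le) k.cast_nonneg
  have hg : 0 < g := by positivity
  have hgk : g ^ k = G := by
    simp only [g, one_div]
    exact rpow_inv_natCast_pow hG.le hs.card_ne_zero
  have hAG : A ≤ G := by
    rw [div_le_iff₀ (by positivity), mul_comm]
    exact sum_le_card_mul_prod_of_one_le ha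
  have amgm : ∏ i ∈ s, (m + a i) ≤ (m + A) ^ k := by
    convert prod_le_sum_div_card_pow fun i hi => add_nonneg hm (ha₀ i hi).le using 2
    rw [sum_add_distrib, sum_const, nsmul_eq_mul, add_div, mul_div_cancel_left₀ _ hk]
  calc ∏ i ∈ s, (m / a i + 1) = (∏ i ∈ s, (m + a i)) / G := by
        rw [← prod_div_distrib]
        refine prod_congr rfl fun i hi => ?_
        field_simp [(ha₀ i hi).ne']
    _ ≤ (m + A) ^ k / G := by gcongr
    _ ≤ (m + A ^ (1 - (1 : ℝ) / k) * g) ^ k / G := by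
        gcongr
        exact le_rpow_one_sub_mul_rpow hA hAG (by positivity)
    _ = (m / g + A ^ (1 - (1 : ℝ) / k)) ^ k := by
        rw [← hgk, ← div_pow, add_div, mul_div_cancel_right₀ _ hg.ne']

theorem stmt_2 (r n : ℕ) (hr : 1 ≤ r) (m : ℝ) (hm : 0 ≤ m) (a : Fin r → ℕ)
    (ha : ∀ i, 1 ≤ a i) (hsum : ∑ i, a i = n) :
    ∏ i, (m / (a i : ℝ) + 1) ≤
      (m / (∏ i, (a i : ℝ)) ^ ((1 : ℝ) / r) + ((n : ℝ) / r) ^ (1 - (1 : ℝ) / r)) ^ r := by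
  have hne : (univ : Finset (Fin r)).Nonempty := univ_nonempty_iff.2 ⟨⟨0, hr⟩⟩
  have key := prod_div_add_one_le hne hm (a := fun i => (a i : ℝ)) fun i _ => by exact_mod_cast ha i
  rwa [card_univ, Fintype.card_fin, ← Nat.cast_sum, hsum] at key
end

section
/- Let r ≥ 2 be an integer and let d_1, ..., d_n be nonnegative reals with Σ d_i = rm. If ρ ≥ ((1/n) Σ_{i=1}^n d_i^(r/(r-1)))^((r-1)/r), then (1/n) Σ_{i=1}^n d_i^(r/(r-1)) − (rm/n)^(r/(r-1)) ≤ (r/(r-1)) · ρ^(1/(r-1)) · (ρ − rm/n). -/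
/-!
Write `q = r/(r-1)` and `a = rm/n`. The hypothesis on `ρ` says exactly that the `q`-th power
mean satisfies `(1/n) ∑ dᵢ^q ≤ ρ^q`, so it suffices to bound `ρ^q - a^q`, and this is the
tangent-line inequality `ρ^q - a^q ≤ q ρ^(q-1) (ρ - a)` for the convex function `t ↦ t^q`,
with `q - 1 = 1/(r-1)`.
-/

open Real

namespace Real

theorem rpow_sub_rpow_le_mul_rpow_sub_one_mul_sub {p a x : ℝ} (hp : 1 ≤ p) (ha : 0 ≤ a)
    (hx : 0 ≤ x) : x ^ p - a ^ p ≤ p * x ^ (p - 1) * (x - a) := by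
  rcases hp.eq_or_lt with rfl | hp
  · simp
  rcases hx.eq_or_lt with rfl | hx
  · simp [zero_rpow (by linarith : p ≠ 0), zero_rpow (by linarith : p - 1 ≠ 0),
      rpow_nonneg ha p]
  have hbernoulli : 1 + p * (a / x - 1) ≤ (a / x) ^ p := by
    simpa using one_add_mul_self_le_rpow_one_add (s := a / x - 1)
      (by linarith [div_nonneg ha hx.le]) hp.le
  have hscaled := mul_le_mul_of_nonneg_right hbernoulli (rpow_nonneg hx.le p)
  rw [div_rpow ha hx.le, div_mul_cancel₀ _ (rpow_pos_of_pos hx p).ne'] at hscaled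
  rw [rpow_sub_one hx.ne']
  have hexpand : x ^ p / x * (x - a) = x ^ p - x ^ p * (a / x) := by field_simp
  linear_combination hscaled - p * hexpand

end Real

theorem stmt_4_general (r n : ℕ) (hr : 2 ≤ r) (m : ℝ) (hm : 0 ≤ m)
    (d : Fin n → ℝ) (hd : ∀ i, 0 ≤ d i) (ρ : ℝ)
    (hρ : ((1 / (n : ℝ)) * ∑ i, d i ^ ((r : ℝ) / ((r : ℝ) - 1))) ^ (((r : ℝ) - 1) / r) ≤ ρ) :
    (1 / (n : ℝ)) * ∑ i, d i ^ ((r : ℝ) / ((r : ℝ) - 1)) -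
        ((r : ℝ) * m / n) ^ ((r : ℝ) / ((r : ℝ) - 1)) ≤
      (r : ℝ) / ((r : ℝ) - 1) * ρ ^ ((1 : ℝ) / ((r : ℝ) - 1)) * (ρ - (r : ℝ) * m / n) := by
  have hr1 : (1 : ℝ) ≤ r - 1 := by
    have : (2 : ℝ) ≤ r := by exact_mod_cast hr
    linarith
  set q : ℝ := r / (r - 1) with hq
  have hq1 : 1 ≤ q := by rw [hq, le_div_iff₀ (by linarith)]; linarith
  have hq_sub_one : q - 1 = 1 / (r - 1) := by rw [hq]; field_simp; ring
  set S : ℝ := (1 / (n : ℝ)) * ∑ i, d i ^ q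
  have hS : 0 ≤ S :=
    mul_nonneg (by positivity) (Finset.sum_nonneg fun i _ => rpow_nonneg (hd i) q)
  have hρ0 : 0 ≤ ρ := (rpow_nonneg hS _).trans hρ
  have hSρ : S ≤ ρ ^ q := by
    rwa [show ((r : ℝ) - 1) / r = q⁻¹ by rw [hq, inv_div], rpow_inv_le_iff_of_pos hS hρ0
      (by linarith)] at hρ
  have htangent := rpow_sub_rpow_le_mul_rpow_sub_one_mul_sub hq1
    (by positivity : (0 : ℝ) ≤ r * m / n) hρ0
  rw [hq_sub_one] at htangent
  linarith

theorem stmt_4 (r n : ℕ) (hr : 2 ≤ r) (hn : 0 < n) (m : ℝ) (hm : 0 ≤ m)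
    (d : Fin n → ℝ) (hd : ∀ i, 0 ≤ d i) (hsum : ∑ i, d i = r * m) (ρ : ℝ)
    (hρ : ((1 / (n : ℝ)) * ∑ i, d i ^ ((r : ℝ) / ((r : ℝ) - 1))) ^ (((r : ℝ) - 1) / r) ≤ ρ) :
    (1 / (n : ℝ)) * ∑ i, d i ^ ((r : ℝ) / ((r : ℝ) - 1)) -
        ((r : ℝ) * m / n) ^ ((r : ℝ) / ((r : ℝ) - 1)) ≤
      (r : ℝ) / ((r : ℝ) - 1) * ρ ^ ((1 : ℝ) / ((r : ℝ) - 1)) * (ρ - (r : ℝ) * m / n) :=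
  stmt_4_general r n hr m hm d hd ρ hρ
end

section
/- For every r-uniform hypergraph H with n vertices and m edges there exists an r-uniform hypergraph Ĥ with n vertices and m edges such that Δ(Ĥ) − δ(Ĥ) ≤ 1 and the symmetric difference of the edge sets E(H) and E(Ĥ) has size at most s(H) = Σ_i |d_H(i) − rm/n|. -/
/-!
Write `d` for the degree sequence of `H` and `c = rm/n` for its mean. Let `t` be `⌊c⌋ + 1` on
a set `S` of `rm mod n` vertices and `⌊c⌋` elsewhere, so that `∑ t = rm = ∑ d`. If `S` is chosen
so that either all vertices in `S` have degree `> ⌊c⌋` or all vertices outside `S` have degree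
`≤ ⌊c⌋`, then `|d i - t i| ≤ |d i - c| ± (c - t i)` for every `i`, with the same sign for all
`i`, and the correction terms sum to `0`.

If `d v < d u`, some edge `a ∋ u` with `v ∉ a` can be replaced by `a - u + v` without creating a
repeated edge, since otherwise shifting would map the edges containing `u` but not `v`
injectively into the edges containing `v` but not `u`. Doing this with `d u > t u` and
`d v < t v` changes two edges and lowers `∑ |d - t|` by `2`.
-/

open Finset
open scoped symmDiff

theorem Finset.exists_lt_of_sum_eq_of_ne {ι M : Type*} [AddCommMonoid M] [LinearOrder M]
    [IsOrderedCancelAddMonoid M] {s : Finset ι} {f g : ι → M}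
    (h : ∑ i ∈ s, f i = ∑ i ∈ s, g i) (hne : ∃ i ∈ s, f i ≠ g i) : ∃ i ∈ s, f i < g i := by
  by_contra! hle
  obtain ⟨i, hi, hfg⟩ := hne
  exact hfg ((sum_eq_sum_iff_of_le hle).1 h.symm i hi).symm

section AbsSub

variable {ι : Type*} {s : Finset ι} {d c t : ι → ℝ}

theorem Finset.sum_abs_sub_le_of_le_or_le (hsum : ∑ i ∈ s, t i = ∑ i ∈ s, c i)
    (h : ∀ i ∈ s, t i ≤ c i ∨ t i ≤ d i) :
    ∑ i ∈ s, |d i - t i| ≤ ∑ i ∈ s, |d i - c i| :=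
  calc ∑ i ∈ s, |d i - t i| ≤ ∑ i ∈ s, (|d i - c i| + (c i - t i)) := by
        refine sum_le_sum fun i hi => ?_
        rcases h i hi with h | h
        · linarith [abs_sub_le (d i) (c i) (t i), abs_of_nonneg (sub_nonneg.2 h)]
        · linarith [abs_of_nonneg (sub_nonneg.2 h), le_abs_self (d i - c i)]
    _ = ∑ i ∈ s, |d i - c i| := by
        rw [sum_add_distrib, sum_sub_distrib, hsum, sub_self, add_zero]

theorem Finset.sum_abs_sub_le_of_ge_or_ge (hsum : ∑ i ∈ s, t i = ∑ i ∈ s, c i)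
    (h : ∀ i ∈ s, c i ≤ t i ∨ d i ≤ t i) :
    ∑ i ∈ s, |d i - t i| ≤ ∑ i ∈ s, |d i - c i| := by
  simpa only [Pi.neg_apply, neg_sub_neg, abs_sub_comm] using
    sum_abs_sub_le_of_le_or_le (d := -d) (c := -c) (t := -t) (by simp [sum_neg_distrib, hsum])
      (by simpa only [Pi.neg_apply, neg_le_neg_iff] using h)

end AbsSub

theorem Finset.exists_card_eq_and_forall_lt_or_forall_le {ι β : Type*} [Fintype ι]
    [LinearOrder β] (d : ι → β) (q : β) {k : ℕ} (hk : k ≤ Fintype.card ι) :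
    ∃ S : Finset ι, #S = k ∧ ((∀ i ∈ S, q < d i) ∨ ∀ i ∉ S, d i ≤ q) := by
  classical
  rcases le_total k #{i | q < d i} with h | h
  · obtain ⟨S, hS, rfl⟩ := exists_subset_card_eq h
    exact ⟨S, rfl, .inl fun i hi => (mem_filter.1 (hS hi)).2⟩
  · obtain ⟨S, hS, rfl⟩ := exists_superset_card_eq h hk
    exact ⟨S, rfl, .inr fun i hi => not_lt.1 fun hlt => hi (hS (mem_filter.2 ⟨mem_univ _, hlt⟩))⟩

theorem exists_balanced_abs_sub_le {ι : Type*} [Fintype ι] [Nonempty ι] (N : ℕ) (d : ι → ℕ) :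
    ∃ t : ι → ℕ, ∑ i, t i = N ∧ (∀ i j, t i ≤ t j + 1) ∧
      ∑ i, |(d i : ℝ) - t i| ≤ ∑ i, |(d i : ℝ) - N / Fintype.card ι| := by
  classical
  set n := Fintype.card ι
  have hn : 0 < n := Fintype.card_pos
  set q := N / n
  obtain ⟨S, hS, hSd⟩ := exists_card_eq_and_forall_lt_or_forall_le d q (Nat.mod_lt N hn).le
  let t : ι → ℕ := fun i => q + if i ∈ S then 1 else 0
  have ht : ∑ i, t i = N := by
    simp only [t, sum_add_distrib, sum_const, card_univ, smul_eq_mul, sum_boole,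
      filter_mem_eq_inter, univ_inter, hS]
    exact Nat.div_add_mod N n
  have htR : ∑ i, (t i : ℝ) = ∑ _i : ι, (N : ℝ) / n := by
    rw [← Nat.cast_sum, ht, sum_const, card_univ, nsmul_eq_mul]
    exact (mul_div_cancel₀ _ (by positivity)).symm
  have hq : (q : ℝ) ≤ N / n := Nat.cast_div_le
  have hq' : (N : ℝ) / n ≤ q + 1 := by
    rw [div_le_iff₀ (by positivity)]
    exact_mod_cast (Nat.lt_mul_div_succ N hn).le.trans_eq (mul_comm _ _)
  refine ⟨t, ht, fun i j => by simp only [t]; split_ifs <;> omega, ?_⟩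
  rcases hSd with hlt | hle
  · refine sum_abs_sub_le_of_le_or_le htR fun i _ => ?_
    by_cases hi : i ∈ S
    · exact .inr (by simp only [t, if_pos hi]; exact_mod_cast hlt i hi)
    · exact .inl (by simpa [t, hi] using hq)
  · refine sum_abs_sub_le_of_ge_or_ge htR fun i _ => ?_
    by_cases hi : i ∈ S
    · exact .inl (by simpa [t, hi] using hq')
    · exact .inr (by simpa [t, hi] using hle i hi)

namespace Hypergraph

variable {α : Type*} [DecidableEq α] {E : Finset (Finset α)} {a b : Finset α} {r : ℕ} {u v w : α}

def degree (E : Finset (Finset α)) (v : α) : ℕ := #{e ∈ E | v ∈ e}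

theorem sum_degree [Fintype α] (hE : ∀ e ∈ E, #e = r) : ∑ v, degree E v = r * #E :=
  calc ∑ v, degree E v = ∑ e ∈ E, #e := by
        simpa [degree, bipartiteAbove, bipartiteBelow] using
          sum_card_bipartiteAbove_eq_sum_card_bipartiteBelow (· ∈ ·) (s := univ) (t := E)
    _ = r * #E := by rw [sum_congr rfl hE, sum_const, smul_eq_mul, mul_comm]

theorem degree_eq_card_add_card (E : Finset (Finset α)) (u v : α) :
    degree E u = #{e ∈ E | u ∈ e ∧ v ∈ e} + #{e ∈ E | u ∈ e ∧ v ∉ e} := by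
  rw [degree, ← card_filter_add_card_filter_not (s := {e ∈ E | u ∈ e}) (v ∈ ·), filter_filter,
    filter_filter]

theorem degree_erase (ha : a ∈ E) (w : α) :
    degree (E.erase a) w + (if w ∈ a then 1 else 0) = degree E w := by
  unfold degree
  rw [filter_erase]
  split_ifs with hw
  · exact card_erase_add_one (mem_filter.2 ⟨ha, hw⟩)
  · rw [add_zero, erase_eq_of_notMem (s := {e ∈ E | w ∈ e}) fun h => hw (mem_filter.1 h).2]

theorem degree_insert (hb : b ∉ E) (w : α) :
    degree (insert b E) w = degree E w + if w ∈ b then 1 else 0 := by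
  unfold degree
  rw [filter_insert]
  split_ifs with hw
  · exact card_insert_of_notMem fun h => hb (mem_filter.1 h).1
  · rfl

def shift (u v : α) (a : Finset α) : Finset α := insert v (a.erase u)

theorem mem_shift : w ∈ shift u v a ↔ w = v ∨ w ≠ u ∧ w ∈ a := by
  rw [shift, mem_insert, mem_erase]

theorem card_shift (hu : u ∈ a) (hv : v ∉ a) : #(shift u v a) = #a := by
  rw [shift, card_insert_of_notMem fun h => hv (mem_of_mem_erase h), card_erase_add_one hu]

theorem shift_shift (hu : u ∈ a) (hv : v ∉ a) : shift v u (shift u v a) = a := by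
  rw [shift, shift, erase_insert fun h => hv (mem_of_mem_erase h), insert_erase hu]

theorem exists_shift_notMem (h : degree E v < degree E u) :
    ∃ a ∈ E, u ∈ a ∧ v ∉ a ∧ shift u v a ∉ E := by
  by_contra! hcon
  have huv : u ≠ v := by rintro rfl; exact h.false
  have hmaps : Set.MapsTo (shift u v) ({a ∈ E | u ∈ a ∧ v ∉ a} : Finset _)
      ({b ∈ E | v ∈ b ∧ u ∉ b} : Finset _) := by
    intro a ha
    simp only [coe_filter, Set.mem_ofPred_eq] at ha ⊢
    exact ⟨hcon a ha.1 ha.2.1 ha.2.2, mem_shift.2 (.inl rfl), by simp [mem_shift, huv]⟩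
  have hinj : Set.InjOn (shift u v) ({a ∈ E | u ∈ a ∧ v ∉ a} : Finset _) := by
    refine Set.LeftInvOn.injOn (f₁' := shift v u) fun a ha => ?_
    simp only [coe_filter, Set.mem_ofPred_eq] at ha
    exact shift_shift ha.2.1 ha.2.2
  have hle := card_le_card_of_injOn (shift u v) hmaps hinj
  rw [degree_eq_card_add_card E u v, degree_eq_card_add_card E v u] at h
  simp only [and_comm (a := v ∈ _) (b := u ∈ _)] at h
  omega

theorem exists_shift_step (hE : ∀ e ∈ E, #e = r) (h : degree E v < degree E u) :
    ∃ E' : Finset (Finset α), (∀ e ∈ E', #e = r) ∧ #E' = #E ∧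
      (∀ w, degree E' w + (if w = u then 1 else 0) = degree E w + if w = v then 1 else 0) ∧
      #(E ∆ E') ≤ 2 := by
  have huv : u ≠ v := by rintro rfl; exact h.false
  obtain ⟨a, ha, hu, hv, hb⟩ := exists_shift_notMem h
  have hb' : shift u v a ∉ E.erase a := fun h' => hb (mem_of_mem_erase h')
  refine ⟨insert (shift u v a) (E.erase a), ?_, ?_, fun w => ?_, ?_⟩
  · rintro e he
    rcases mem_insert.1 he with rfl | he
    · rw [card_shift hu hv, hE a ha]
    · exact hE e (mem_of_mem_erase he)
  · rw [card_insert_of_notMem hb', card_erase_add_one ha]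
  · rw [degree_insert hb', ← degree_erase ha w]
    by_cases hwu : w = u
    · subst hwu; simp [mem_shift, huv, hu]
    by_cases hwv : w = v
    · subst hwv; simp [mem_shift, hv, huv.symm]
    simp [mem_shift, hwu, hwv]
  · refine (card_le_card fun x hx => ?_).trans (card_le_two (a := a) (b := shift u v a))
    simp only [mem_symmDiff, mem_insert, mem_erase, mem_singleton] at hx ⊢
    tauto

theorem exists_degree_eq [Fintype α] (hE : ∀ e ∈ E, #e = r) {t : α → ℕ}
    (ht : ∀ i j, t i ≤ t j + 1) (hsum : ∑ i, t i = r * #E) :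
    ∃ F : Finset (Finset α), (∀ e ∈ F, #e = r) ∧ #F = #E ∧ (∀ i, degree F i = t i) ∧
      #(E ∆ F) ≤ ∑ i, ((degree E i : ℤ) - t i).natAbs := by
  induction hM : ∑ i, ((degree E i : ℤ) - t i).natAbs using Nat.strong_induction_on
    generalizing E with
  | _ M ih =>
  by_cases hd : ∀ i, degree E i = t i
  · exact ⟨E, hE, rfl, hd, by simp⟩
  simp only [not_forall] at hd
  have hsum' : ∑ i, degree E i = ∑ i, t i := (sum_degree hE).trans hsum.symm
  obtain ⟨u, -, hu⟩ := exists_lt_of_sum_eq_of_ne hsum'.symm (by simpa [eq_comm] using hd)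
  obtain ⟨v, -, hv⟩ := exists_lt_of_sum_eq_of_ne hsum' (by simpa using hd)
  have huv : degree E v < degree E u := by have := ht v u; omega
  obtain ⟨E', hE', hcard, hdeg, hdiff⟩ := exists_shift_step hE huv
  have hdrop : ∑ i, ((degree E' i : ℤ) - t i).natAbs + 2 = M := by
    have hterm : ∀ i, ((degree E' i : ℤ) - t i).natAbs + ((if i = u then 1 else 0) +
        (if i = v then 1 else 0)) = ((degree E i : ℤ) - t i).natAbs := by
      intro i
      have := hdeg i
      split_ifs at this ⊢ <;> subst_vars <;> omega
    rw [← hM, ← sum_congr rfl fun i _ => hterm i, sum_add_distrib, sum_add_distrib,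
      sum_ite_eq', sum_ite_eq', if_pos (mem_univ _), if_pos (mem_univ _)]
  obtain ⟨F, hF, hFcard, hFdeg, hFdiff⟩ := ih _ (by omega) hE' (hcard ▸ hsum) rfl
  refine ⟨F, hF, hFcard.trans hcard, hFdeg, ?_⟩
  calc #(E ∆ F) ≤ #(E ∆ E' ∪ E' ∆ F) := card_le_card (symmDiff_triangle E E' F)
    _ ≤ #(E ∆ E') + #(E' ∆ F) := card_union_le _ _
    _ ≤ M := by omega

end Hypergraph

/-- Every `r`-uniform hypergraph with `n` vertices and `m` edges can be changed,
in at most `s(H)` edges, into one whose maximum and minimum degrees differ by at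
most `1`. -/
theorem stmt_8 (r n m : ℕ) (hn : 0 < n) (E : Finset (Finset (Fin n)))
    (hE : ∀ e ∈ E, e.card = r) (hm : E.card = m) :
    ∃ F : Finset (Finset (Fin n)), (∀ e ∈ F, e.card = r) ∧ F.card = m ∧
      (∀ i j : Fin n,
        (F.filter (fun e => i ∈ e)).card ≤ (F.filter (fun e => j ∈ e)).card + 1) ∧
      ((((E \ F) ∪ (F \ E)).card : ℝ) ≤
        ∑ i, |((E.filter (fun e => i ∈ e)).card : ℝ) - (r : ℝ) * m / n|) := by
  have : Nonempty (Fin n) := Fin.pos_iff_nonempty.1 hn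
  obtain ⟨t, htsum, htbal, htclose⟩ := exists_balanced_abs_sub_le (r * m) (Hypergraph.degree E)
  obtain ⟨F, hF, hFcard, hFdeg, hFdiff⟩ :=
    Hypergraph.exists_degree_eq hE htbal (by rw [htsum, hm])
  refine ⟨F, hF, hFcard.trans hm, fun i j => ?_, ?_⟩
  · have := htbal i j
    rwa [← hFdeg i, ← hFdeg j] at this
  · have hclose := htclose
    simp only [Nat.cast_mul, Fintype.card_fin] at hclose
    calc (#(E ∆ F) : ℝ) ≤ ((∑ i, ((Hypergraph.degree E i : ℤ) - t i).natAbs : ℕ) : ℝ) := by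
          exact_mod_cast hFdiff
      _ = ∑ i, |(Hypergraph.degree E i : ℝ) - t i| := by simp [Nat.cast_natAbs]
      _ ≤ _ := hclose
end

section
/- Let H be an r-partite r-uniform hypergraph with m edges and vertex classes V_1, ..., V_r of sizes n_1, ..., n_r, such that for each class i the maximum degree Δ_i of vertices in V_i satisfies Δ_i ≤ m/n_i + 1. If ρ ≤ (Δ_1 Δ_2 ⋯ Δ_r)^(1/r), then ρ ≤ m/(n_1 n_2 ⋯ n_r)^(1/r) + (n/r)^(1 − 1/r), where n = n_1 + ... + n_r. -/
/-- An `r`-partite `r`-uniform hypergraph with classes of sizes `a 0, …, a (r-1)`: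
vertices are `Σ i : Fin r, Fin (a i)` and each edge meets each class exactly once.
If each class maximum degree satisfies `Δᵢ ≤ m/nᵢ + 1` and `ρ ≤ (Δ₁⋯Δ_r)^(1/r)`,
then `ρ ≤ m/(n₁⋯n_r)^(1/r) + (n/r)^(1−1/r)`. -/
theorem stmt_12 (r n m : ℕ) (hr : 1 ≤ r) (a : Fin r → ℕ) (ha : ∀ i, 1 ≤ a i)
    (hn : ∑ i, a i = n)
    (E : Finset (Finset (Σ i : Fin r, Fin (a i))))
    (hpart : ∀ e ∈ E, ∀ i : Fin r, (e.filter (fun v => v.1 = i)).card = 1)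
    (hm : E.card = m)
    (d : (Σ i : Fin r, Fin (a i)) → ℕ)
    (hd : ∀ v, d v = (E.filter (fun e => v ∈ e)).card)
    (Δ : Fin r → ℕ)
    (hΔdef : ∀ i, Δ i = Finset.univ.sup (fun x : Fin (a i) => d ⟨i, x⟩))
    (hΔ : ∀ i, (Δ i : ℝ) ≤ (m : ℝ) / (a i : ℝ) + 1)
    (ρ : ℝ) (hρ : ρ ≤ (∏ i, (Δ i : ℝ)) ^ ((1 : ℝ) / r)) :
    ρ ≤ (m : ℝ) / (∏ i, (a i : ℝ)) ^ ((1 : ℝ) / r) +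
        ((n : ℝ) / r) ^ (1 - (1 : ℝ) / r) := by
  have hrpos : (0:ℝ) < r := by positivity
  have hapos : ∀ i, (0:ℝ) < (a i : ℝ) := fun i => by exact_mod_cast (ha i)
  have hQpos : (0:ℝ) < ∏ i, (a i : ℝ) := Finset.prod_pos fun i _ => hapos i
  -- n/r ≤ ∏ a i (in ℕ: ∑ a ≤ r * ∏ a)
  have hnat : n ≤ r * ∏ i, a i := by
    rw [← hn]
    calc ∑ i, a i ≤ ∑ _i : Fin r, ∏ j, a j := by
          refine Finset.sum_le_sum fun i _ => ?_
          exact Finset.single_le_prod' (fun j _ => ha j) (Finset.mem_univ i)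
      _ = r * ∏ j, a j := by simp [Finset.sum_const, Finset.card_univ]
  have hnr : (n:ℝ) / r ≤ ∏ i, (a i : ℝ) := by
    rw [div_le_iff₀ hrpos]
    calc (n:ℝ) ≤ (r:ℝ) * ∏ i, (a i : ℝ) := by
          push_cast
          exact_mod_cast Nat.cast_le.mpr hnat
      _ = (∏ i, (a i : ℝ)) * r := by ring
  have hnrpos : (0:ℝ) < (n:ℝ) / r := by
    have hrn : r ≤ n := by
      rw [← hn]
      calc r = ∑ _i : Fin r, 1 := by simp
        _ ≤ ∑ i, a i := Finset.sum_le_sum fun i _ => ha i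
    have : (0:ℝ) < (n:ℝ) := by exact_mod_cast Nat.lt_of_lt_of_le hr hrn
    positivity
  -- step 1: ∏ Δ ≤ ∏ (m/a + 1) = ∏ (m + a) / ∏ a
  have h1 : (∏ i, (Δ i : ℝ)) ≤ (∏ i, ((m:ℝ) + (a i : ℝ))) / ∏ i, (a i : ℝ) := by
    rw [← Finset.prod_div_distrib]
    refine Finset.prod_le_prod (fun i _ => by positivity) fun i _ => ?_
    have := hΔ i
    rw [div_add' _ _ _ (ne_of_gt (hapos i)), one_mul] at this
    exact this
  -- step 2: apply rpow
  have h2 : (∏ i, (Δ i : ℝ)) ^ ((1:ℝ)/r) ≤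
      (∏ i, ((m:ℝ) + (a i : ℝ))) ^ ((1:ℝ)/r) / (∏ i, (a i : ℝ)) ^ ((1:ℝ)/r) := by
    rw [← Real.div_rpow (by positivity) (le_of_lt hQpos)]
    exact Real.rpow_le_rpow (by positivity) h1 (by positivity)
  -- step 3: AM-GM : (∏ (m+a))^(1/r) ≤ m + n/r
  have h3 : (∏ i, ((m:ℝ) + (a i : ℝ))) ^ ((1:ℝ)/r) ≤ (m:ℝ) + (n:ℝ)/r := by
    rw [← Real.finset_prod_rpow _ _ (fun i _ => by positivity)]
    calc ∏ i, ((m:ℝ) + (a i : ℝ)) ^ ((1:ℝ)/r)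
        ≤ ∑ i, ((1:ℝ)/r) * ((m:ℝ) + (a i : ℝ)) := by
          refine Real.geom_mean_le_arith_mean_weighted _ _ _
            (fun i _ => by positivity) ?_ (fun i _ => by positivity)
          simp [Finset.sum_const, Finset.card_univ]
          field_simp
      _ = (m:ℝ) + (n:ℝ)/r := by
          rw [← Finset.mul_sum, Finset.sum_add_distrib, Finset.sum_const, Finset.card_univ,
            Fintype.card_fin]
          have : ∑ i, (a i : ℝ) = (n:ℝ) := by exact_mod_cast congrArg Nat.cast hn
          rw [this]
          field_simp
          ring
  -- step 4: split and final bound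
  have hG : (0:ℝ) < (∏ i, (a i : ℝ)) ^ ((1:ℝ)/r) := Real.rpow_pos_of_pos hQpos _
  have h4 : ((n:ℝ)/r) / (∏ i, (a i : ℝ)) ^ ((1:ℝ)/r) ≤ ((n:ℝ)/r) ^ (1 - (1:ℝ)/r) := by
    rw [Real.rpow_sub hnrpos, Real.rpow_one]
    exact div_le_div_of_nonneg_left (le_of_lt hnrpos) (Real.rpow_pos_of_pos hnrpos _)
      (Real.rpow_le_rpow (le_of_lt hnrpos) hnr (by positivity))
  calc ρ ≤ (∏ i, (Δ i : ℝ)) ^ ((1:ℝ)/r) := hρ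
    _ ≤ (∏ i, ((m:ℝ) + (a i : ℝ))) ^ ((1:ℝ)/r) / (∏ i, (a i : ℝ)) ^ ((1:ℝ)/r) := h2
    _ ≤ ((m:ℝ) + (n:ℝ)/r) / (∏ i, (a i : ℝ)) ^ ((1:ℝ)/r) := by
        gcongr
    _ = (m:ℝ) / (∏ i, (a i : ℝ)) ^ ((1:ℝ)/r) + ((n:ℝ)/r) / (∏ i, (a i : ℝ)) ^ ((1:ℝ)/r) := by
        rw [add_div]
    _ ≤ (m:ℝ) / (∏ i, (a i : ℝ)) ^ ((1:ℝ)/r) + ((n:ℝ)/r) ^ (1 - (1:ℝ)/r) := by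
        linarith [h4]
end
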